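/- Let H be a compact quantum group with normal integral φ and inner product ⟨x, y⟩ = φ(S(y∘)x). The Nakayama automorphism N (defined by φ(xy) = φ(y N(x))) is a positive operator: ⟨N(x), x⟩ = ⟨S(x∘), S(x∘)⟩ > 0 for all x ≠ 0. Moreover N commutes with ∘: N(x∘) = N(x)∘. -/

import Mathlib

open TensorProduct Coalgebra HopfAlgebra

variable {H : Type*} [Ring H] [HopfAlgebra ℂ H]

/-- `φ` is a right integral: `Σ φ(x₁) x₂ = φ(x) 1`. -/
def IsRightIntegral (φ : H →ₗ[ℂ] ℂ) : Prop :=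
  ∀ x : H,
    TensorProduct.lid ℂ H ((LinearMap.rTensor H φ) (Coalgebra.comul (R := ℂ) x)) = φ x • 1

/-- `φ` is a left integral: `Σ x₁ φ(x₂) = φ(x) 1`. -/
def IsLeftIntegral (φ : H →ₗ[ℂ] ℂ) : Prop :=
  ∀ x : H,
    TensorProduct.rid ℂ H ((LinearMap.lTensor H φ) (Coalgebra.comul (R := ℂ) x)) = φ x • 1

/-- The sesquilinear form `⟨x, y⟩ = φ(S(y∘) x)` attached to the integral `φ`. -/
noncomputable def intInner (circ : H → H) (φ : H →ₗ[ℂ] ℂ) (x y : H) : ℂ :=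
  φ (antipode (R := ℂ) (circ y) * x)

/-!
Write `T = ∘ S ∘`. Applying `∘` to the antipode identity for `x∘`, whose coproduct is the flip
of `(∘ ⊗ ∘) Δx`, gives `Σ x₂ T(x₁) = ε(x) 1`; applying `S` turns this into `(S T) ⋆ S = 1` for
the convolution product, and since `S ⋆ id = 1` we get `S T = id`, i.e. `S(S(x∘)∘) = x`. Hence
`⟨N x, x⟩ = φ(S(x∘) N x) = φ(x S(x∘)) = φ(S(S(x∘)∘) S(x∘)) = ⟨S(x∘), S(x∘)⟩`, which is positive
because `S(x∘) ≠ 0` for `x ≠ 0`. Finally `φ(z N(x∘)) = φ(z N(x)∘)` for all `z`, by moving `∘`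
through `φ` and using the defining property of `N` twice, and `φ` is nondegenerate.
-/

universe w

open WithConv

namespace Coalgebra.Repr

variable {R A ι : Type*} [CommSemiring R] [AddCommMonoid A] [Module R A] [CoalgebraStruct R A]

/-- Representations indexed in an arbitrary universe `w`: hypotheses quantifying over the index
type of a representation only do so in one fixed universe. -/
noncomputable def reindexULiftFin {a : A} (r : Repr R a ι) :
    Repr R a (ULift.{w} (Fin r.index.card)) where
  index := Finset.univ
  left k := r.left (r.index.equivFin.symm k.down)
  right k := r.right (r.index.equivFin.symm k.down)
  eq := by
    rw [← r.eq, ← Finset.sum_coe_sort r.index]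
    exact Equiv.sum_comp (Equiv.ulift.trans r.index.equivFin.symm)
      (fun i => r.left i ⊗ₜ[R] r.right i)

end Coalgebra.Repr

section StarHopf

def ReversesComul (c : H →ₗ⋆[ℂ] H) : Prop :=
  ∀ (x : H) (ι : Type w) (r : Repr ℂ x ι),
    comul (R := ℂ) (c x) = ∑ i ∈ r.index, c (r.right i) ⊗ₜ[ℂ] c (r.left i)

variable {c : H →ₗ⋆[ℂ] H}

lemma map_one_of_involutive_of_map_mul (hinvol : ∀ x, c (c x) = x)
    (hmul : ∀ x y, c (x * y) = c x * c y) : c 1 = 1 := by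
  simpa [hinvol] using (hmul (c 1) 1).symm

@[simps]
noncomputable def ReversesComul.reprFlip (hcomul : ReversesComul.{w} c)
    {x : H} {ι : Type*} (r : Repr ℂ x ι) : Repr ℂ (c x) ι where
  index := r.index
  left i := c (r.right i)
  right i := c (r.left i)
  eq := by
    rw [hcomul x _ r.reindexULiftFin, ← Finset.sum_coe_sort r.index]
    exact (Equiv.sum_comp (Equiv.ulift.trans r.index.equivFin.symm)
      (fun i => c (r.right i) ⊗ₜ[ℂ] c (r.left i))).symm

lemma ReversesComul.counit_map (hcomul : ReversesComul.{w} c) (hinvol : ∀ x, c (c x) = x)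
    (x : H) : counit (R := ℂ) (c x) = starRingEnd ℂ (counit x) := by
  let r := ℛ ℂ x
  have hsplit :
      ∑ i ∈ r.index, starRingEnd ℂ (counit (R := ℂ) (c (r.right i))) • r.left i = x := by
    simpa [map_sum, hinvol] using congrArg c (sum_counit_smul (hcomul.reprFlip r))
  have hconj : starRingEnd ℂ (counit (R := ℂ) (c x)) = ∑ i ∈ r.index,
      counit (R := ℂ) (r.left i) * starRingEnd ℂ (counit (R := ℂ) (c (r.right i))) := by
    conv_lhs => rw [← sum_counit_smul r]
    simp [map_sum]
  have hcounit := congrArg (counit (R := ℂ)) hsplit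
  simp only [map_sum, map_smul, smul_eq_mul] at hcounit
  rw [← Complex.conj_conj (counit (c x)), hconj, ← hcounit]
  simp_rw [mul_comm]

lemma ReversesComul.sum_right_mul_map_antipode_map (hcomul : ReversesComul.{w} c)
    (hinvol : ∀ x, c (c x) = x) (hmul : ∀ x y, c (x * y) = c x * c y)
    {x : H} {ι : Type*} (r : Repr ℂ x ι) :
    ∑ i ∈ r.index, r.right i * c (antipode ℂ (c (r.left i))) = counit (R := ℂ) x • 1 := by
  simpa [map_sum, hmul, hinvol, map_one_of_involutive_of_map_mul hinvol hmul,
    hcomul.counit_map hinvol] using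
    congrArg c (sum_mul_antipode_eq_smul (hcomul.reprFlip r))

theorem ReversesComul.antipode_map_antipode_map (hcomul : ReversesComul.{w} c)
    (hinvol : ∀ x, c (c x) = x) (hmul : ∀ x y, c (x * y) = c x * c y)
    (x : H) : antipode ℂ (c (antipode ℂ (c x))) = x := by
  have hinv :
      toConv (antipode ℂ ∘ₗ c.comp ((antipode ℂ).comp c)) * toConv (antipode ℂ) = 1 := by
    ext z
    rw [(ℛ ℂ z).convMul_apply]
    simpa [antipode_mul_antidistrib, Algebra.algebraMap_eq_smul_one] using
      congrArg (antipode ℂ) (hcomul.sum_right_mul_map_antipode_map hinvol hmul (ℛ ℂ z))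
  exact congr(ofConv $(left_inv_eq_right_inv hinv LinearMap.antipode_mul_id) x)

end StarHopf

section Integral

variable {circ : H → H} {φ : H →ₗ[ℂ] ℂ}

lemma eq_zero_of_forall_map_mul_eq_zero (hpos : ∀ x : H, x ≠ 0 → 0 < (intInner circ φ x x).re)
    {v : H} (hv : ∀ z, φ (z * v) = 0) : v = 0 := by
  by_contra hne
  simpa [intInner, hv] using hpos v hne

lemma intInner_nakayama_self {N : H → H} (hNak : ∀ x y : H, φ (x * y) = φ (y * N x))
    (hSS : ∀ x, antipode ℂ (circ (antipode ℂ (circ x))) = x) (x : H) :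
    intInner circ φ (N x) x =
      intInner circ φ (antipode ℂ (circ x)) (antipode ℂ (circ x)) := by
  rw [intInner, intInner, hSS, hNak x]

lemma nakayama_map_circ (hpos : ∀ x : H, x ≠ 0 → 0 < (intInner circ φ x x).re)
    (hcinvol : ∀ x : H, circ (circ x) = x) (hcmul : ∀ x y : H, circ (x * y) = circ x * circ y)
    (hφcirc : ∀ x : H, φ (circ x) = starRingEnd ℂ (φ x))
    {N : H → H} (hNak : ∀ x y : H, φ (x * y) = φ (y * N x)) (x : H) :
    N (circ x) = circ (N x) := by
  refine sub_eq_zero.mp (eq_zero_of_forall_map_mul_eq_zero hpos fun z => ?_)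
  rw [mul_sub, map_sub, sub_eq_zero]
  calc φ (z * N (circ x)) = φ (circ x * z) := (hNak (circ x) z).symm
    _ = starRingEnd ℂ (φ (x * circ z)) := by rw [← hφcirc, hcmul, hcinvol]
    _ = starRingEnd ℂ (φ (circ z * N x)) := by rw [hNak]
    _ = φ (z * circ (N x)) := by rw [← hφcirc, hcmul, hcinvol]

end Integral

theorem nakayama_positive_commutes_circ_general
    (circ : H → H)
    (hcadd : ∀ x y : H, circ (x + y) = circ x + circ y)
    (hcsmul : ∀ (a : ℂ) (x : H), circ (a • x) = (starRingEnd ℂ) a • circ x)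
    (hcinvol : ∀ x : H, circ (circ x) = x)
    (hcanti : ∀ (x : H) (ι : Type*) (r : Coalgebra.Repr ℂ x ι),
      Coalgebra.comul (R := ℂ) (circ x) =
        ∑ i ∈ r.index, circ (r.right i) ⊗ₜ[ℂ] circ (r.left i))
    (hcmul : ∀ x y : H, circ (x * y) = circ x * circ y)
    (φ : H →ₗ[ℂ] ℂ)
    (hpos : ∀ x : H, x ≠ 0 →
      0 < (intInner circ φ x x).re ∧ (intInner circ φ x x).im = 0)
    (hφcirc : ∀ x : H, φ (circ x) = (starRingEnd ℂ) (φ x))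
    (N : H →ₗ[ℂ] H)
    (hNak : ∀ x y : H, φ (x * y) = φ (y * N x)) :
    ∀ x : H,
      (intInner circ φ (N x) x =
        intInner circ φ (antipode (R := ℂ) (circ x)) (antipode (R := ℂ) (circ x))) ∧
      (x ≠ 0 → 0 < (intInner circ φ (N x) x).re ∧ (intInner circ φ (N x) x).im = 0) ∧
      N (circ x) = circ (N x) := by
  let c : H →ₗ⋆[ℂ] H := { toFun := circ, map_add' := hcadd, map_smul' := hcsmul }
  have hSS : ∀ x, antipode ℂ (circ (antipode ℂ (circ x))) = x :=
    ReversesComul.antipode_map_antipode_map (c := c) hcanti hcinvol hcmul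
  have hpos_re : ∀ x : H, x ≠ 0 → 0 < (intInner circ φ x x).re := fun x hx => (hpos x hx).1
  intro x
  have hnak := intInner_nakayama_self hNak hSS x
  refine ⟨hnak, fun hx => hnak ▸ hpos _ fun h0 => hx ?_,
    nakayama_map_circ hpos_re hcinvol hcmul hφcirc hNak x⟩
  rw [← hSS x, h0, show circ 0 = 0 from map_zero c, map_zero]

/-- in a compact quantum group, the Nakayama automorphism `N` is a
positive operator: `⟨N(x), x⟩ = ⟨S(x∘), S(x∘)⟩ > 0` for `x ≠ 0`; moreover `N`
commutes with `∘`. -/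
theorem nakayama_positive_commutes_circ
    (circ : H → H)
    (hcadd : ∀ x y : H, circ (x + y) = circ x + circ y)
    (hcsmul : ∀ (a : ℂ) (x : H), circ (a • x) = (starRingEnd ℂ) a • circ x)
    (hcinvol : ∀ x : H, circ (circ x) = x)
    (hcanti : ∀ (x : H) (ι : Type*) (r : Coalgebra.Repr ℂ x ι),
      Coalgebra.comul (R := ℂ) (circ x) =
        ∑ i ∈ r.index, circ (r.right i) ⊗ₜ[ℂ] circ (r.left i))
    (hcmul : ∀ x y : H, circ (x * y) = circ x * circ y)
    (φ : H →ₗ[ℂ] ℂ) (hr : IsRightIntegral φ) (hl : IsLeftIntegral φ) (hn : φ 1 = 1)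
    (hherm : ∀ x y : H, intInner circ φ y x = (starRingEnd ℂ) (intInner circ φ x y))
    (hpos : ∀ x : H, x ≠ 0 →
      0 < (intInner circ φ x x).re ∧ (intInner circ φ x x).im = 0)
    (hφcirc : ∀ x : H, φ (circ x) = (starRingEnd ℂ) (φ x))
    (N : H →ₗ[ℂ] H) (hNbij : Function.Bijective N)
    (hNmul : ∀ x y : H, N (x * y) = N x * N y) (hNone : N 1 = 1)
    (hNak : ∀ x y : H, φ (x * y) = φ (y * N x)) :
    ∀ x : H,
      (intInner circ φ (N x) x =
        intInner circ φ (antipode (R := ℂ) (circ x)) (antipode (R := ℂ) (circ x))) ∧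
      (x ≠ 0 → 0 < (intInner circ φ (N x) x).re ∧ (intInner circ φ (N x) x).im = 0) ∧
      N (circ x) = circ (N x) :=
  nakayama_positive_commutes_circ_general circ hcadd hcsmul hcinvol hcanti hcmul φ hpos hφcirc N
    hNak
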